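/- In SL(2,ℝ), let T := [[1, 1/2],[0, 1]] and W := [[0, −1/2],[2, 0]]. Let Γ₀(2) and Γ₀(4) denote the images in SL(2,ℝ) of the subgroups of SL(2,ℤ) consisting of matrices whose lower-left entry is divisible by 2 and by 4, respectively. Then T⁻¹ Γ₀(2) T equals the subgroup of SL(2,ℝ) generated by Γ₀(4) together with W (that is, the conjugate of Γ₀(2) by T is the Fricke group Γ₀*(4) = Γ₀(4) ∪ W·Γ₀(4)). -/
import Mathlib

open Matrix MatrixGroups

private def mkSL (a b c d : ℤ) (h : a * d - b * c = 1) : SL(2, ℤ) :=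
  ⟨!![a, b; c, d], by rw [Matrix.det_fin_two_of]; exact h⟩

private lemma mapInt_fin_two (a b c d : ℤ) :
    (!![a, b; c, d]).map (Int.castRingHom ℝ) = !![(a : ℝ), b; c, d] := by
  ext i j; fin_cases i <;> fin_cases j <;> simp

private lemma mkSL_cast (a b c d : ℤ) (h : a * d - b * c = 1) :
    ((Matrix.SpecialLinearGroup.map (Int.castRingHom ℝ) (mkSL a b c d h)) :
      Matrix (Fin 2) (Fin 2) ℝ) = !![(a : ℝ), b; c, d] := by
  rw [Matrix.SpecialLinearGroup.map_apply_coe]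
  show (!![a, b; c, d]).map (Int.castRingHom ℝ) = _
  exact mapInt_fin_two a b c d

private lemma conj_inv_eq {G : Type*} [Group G] {t y x : G} (h : y * t = t * x) :
    (MulAut.conj t⁻¹) y = x := by
  have : (MulAut.conj t⁻¹) y = t⁻¹ * (y * t) := by
    simp [MulAut.conj_apply, mul_assoc]
  rw [this, h, inv_mul_cancel_left]

/-- The conjugate of `Γ₀(2)` by the half translation `T = [[1,1/2],[0,1]]` is the Fricke
group `Γ₀*(4)`, i.e. the subgroup of `SL(2,ℝ)` generated by `Γ₀(4)` and the normalized
Fricke involution `W = [[0,-1/2],[2,0]]`. -/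
theorem conj_gamma0_two_eq_fricke_four
    (T W : SL(2, ℝ))
    (hT : (T : Matrix (Fin 2) (Fin 2) ℝ) = !![1, 1 / 2; 0, 1])
    (hW : (W : Matrix (Fin 2) (Fin 2) ℝ) = !![0, -(1 / 2); 2, 0])
    (Γ₀₂ Γ₀₄ : Subgroup SL(2, ℝ))
    (h2 : Γ₀₂ = Subgroup.map (Matrix.SpecialLinearGroup.map (Int.castRingHom ℝ))
      (CongruenceSubgroup.Gamma0 2))
    (h4 : Γ₀₄ = Subgroup.map (Matrix.SpecialLinearGroup.map (Int.castRingHom ℝ))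
      (CongruenceSubgroup.Gamma0 4)) :
    Subgroup.map (MulAut.conj T⁻¹).toMonoidHom Γ₀₂
      = Subgroup.closure ((Γ₀₄ : Set SL(2, ℝ)) ∪ {W}) := by
  subst h2 h4
  apply le_antisymm
  · rintro - ⟨-, ⟨γ, hγ, rfl⟩, rfl⟩
    replace hγ := CongruenceSubgroup.Gamma0_mem.mp hγ
    obtain ⟨c', hc⟩ := (ZMod.intCast_zmod_eq_zero_iff_dvd _ 2).mp hγ
    set a : ℤ := γ.1 0 0 with ha
    set b : ℤ := γ.1 0 1 with hb
    set c : ℤ := γ.1 1 0 with hcdef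
    set d : ℤ := γ.1 1 1 with hd
    have hdet : a * d - b * c = 1 := by
      rw [ha, hb, hcdef, hd, ← Matrix.det_fin_two]; exact γ.2
    have hmat : (γ : Matrix (Fin 2) (Fin 2) ℤ) = !![a, b; c, d] :=
      Matrix.eta_fin_two _
    have hxcoe : ((Matrix.SpecialLinearGroup.map (Int.castRingHom ℝ) γ) :
        Matrix (Fin 2) (Fin 2) ℝ) = !![(a : ℝ), b; c, d] := by
      rw [Matrix.SpecialLinearGroup.map_apply_coe, hmat]
      exact mapInt_fin_two a b c d
    -- parity of a and d
    have hc2 : c = 2 * c' := by exact_mod_cast hc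
    have hodd : a % 2 = 1 ∧ d % 2 = 1 := by
      have h1 : Odd (a * d) := ⟨b * c', by linear_combination hdet + b * hc2⟩
      rw [Int.odd_mul, Int.odd_iff, Int.odd_iff] at h1
      exact h1
    obtain ⟨m, hm⟩ : ∃ m, a = d + 2 * m := ⟨(a - d) / 2, by omega⟩
    rcases Int.even_or_odd c' with ⟨k, hk⟩ | ⟨k, hk⟩
    · -- c = 4k
      have hc4 : c = 4 * k := by omega
      have hδdet : (a - 2 * k) * (d + 2 * k) - (b + m - k) * (4 * k) = 1 := by
        linear_combination hdet + 2 * k * hm + b * hc4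
      set δ := mkSL (a - 2 * k) (b + m - k) (4 * k) (d + 2 * k) hδdet with hδ
      have hδmem : δ ∈ CongruenceSubgroup.Gamma0 4 := by
        rw [CongruenceSubgroup.Gamma0_mem]
        show (((4 : ℤ) * k : ℤ) : ZMod 4) = 0
        exact (ZMod.intCast_zmod_eq_zero_iff_dvd _ 4).mpr ⟨k, rfl⟩
      have key : (MulAut.conj T⁻¹).toMonoidHom
          (Matrix.SpecialLinearGroup.map (Int.castRingHom ℝ) γ)
          = Matrix.SpecialLinearGroup.map (Int.castRingHom ℝ) δ := by
        apply conj_inv_eq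
        apply Subtype.ext
        rw [Matrix.SpecialLinearGroup.coe_mul, Matrix.SpecialLinearGroup.coe_mul,
          hxcoe, hT, hδ, mkSL_cast]
        have hmR : (a : ℝ) = d + 2 * m := by exact_mod_cast congrArg (Int.cast : ℤ → ℝ) hm
        have hcR : (c : ℝ) = 4 * k := by exact_mod_cast congrArg (Int.cast : ℤ → ℝ) hc4
        ext i j
        fin_cases i <;> fin_cases j <;>
          simp [Matrix.mul_apply, Fin.sum_univ_two] <;> push_cast <;> linarith
      rw [key]
      exact Subgroup.subset_closure (Or.inl ⟨δ, hδmem, rfl⟩)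
    · -- c = 4k + 2
      have hc4 : c = 4 * k + 2 := by omega
      obtain ⟨n, hn⟩ : ∃ n, d = 2 * n + 1 := ⟨d / 2, by omega⟩
      have haeq : a = 2 * n + 2 * m + 1 := by omega
      have hd2 : (2 * n + 2 * m + 1) * (2 * n + 1) - b * (4 * k + 2) = 1 := by
        rw [← haeq, ← hn, ← hc4]; exact hdet
      have hδdet : (2 * k + 1) * (-2 * b - 2 * m + 2 * k + 1)
          - (n + k + 1) * (-2 * a + 4 * k + 2) = 1 := by
        linear_combination hd2 + (2 * n + 2 * k + 2) * haeq
      set δ := mkSL (2 * k + 1) (n + k + 1) (-2 * a + 4 * k + 2)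
        (-2 * b - 2 * m + 2 * k + 1) hδdet with hδ
      have hδmem : δ ∈ CongruenceSubgroup.Gamma0 4 := by
        rw [CongruenceSubgroup.Gamma0_mem]
        show (((-2 * a + 4 * k + 2 : ℤ)) : ZMod 4) = 0
        exact (ZMod.intCast_zmod_eq_zero_iff_dvd _ 4).mpr ⟨-n - m + k, by omega⟩
      have hmem₁ : W ∈ Subgroup.closure
          (((Subgroup.map (Matrix.SpecialLinearGroup.map (Int.castRingHom ℝ))
            (CongruenceSubgroup.Gamma0 4)) : Set SL(2, ℝ)) ∪ {W}) :=
        Subgroup.subset_closure (Or.inr rfl)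
      have hmem₂ : Matrix.SpecialLinearGroup.map (Int.castRingHom ℝ) δ ∈ Subgroup.closure
          (((Subgroup.map (Matrix.SpecialLinearGroup.map (Int.castRingHom ℝ))
            (CongruenceSubgroup.Gamma0 4)) : Set SL(2, ℝ)) ∪ {W}) :=
        Subgroup.subset_closure (Or.inl ⟨δ, hδmem, rfl⟩)
      have key : (MulAut.conj T⁻¹).toMonoidHom
          (Matrix.SpecialLinearGroup.map (Int.castRingHom ℝ) γ)
          = W * Matrix.SpecialLinearGroup.map (Int.castRingHom ℝ) δ := by
        apply conj_inv_eq
        apply Subtype.ext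
        rw [Matrix.SpecialLinearGroup.coe_mul, Matrix.SpecialLinearGroup.coe_mul,
          Matrix.SpecialLinearGroup.coe_mul, hxcoe, hT, hW, hδ, mkSL_cast]
        have haR : (a : ℝ) = 2 * n + 2 * m + 1 := by
          exact_mod_cast congrArg (Int.cast : ℤ → ℝ) haeq
        have hcR : (c : ℝ) = 4 * k + 2 := by
          exact_mod_cast congrArg (Int.cast : ℤ → ℝ) hc4
        have hdR : (d : ℝ) = 2 * n + 1 := by
          exact_mod_cast congrArg (Int.cast : ℤ → ℝ) hn
        ext i j
        fin_cases i <;> fin_cases j <;>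
          simp [Matrix.mul_apply, Fin.sum_univ_two] <;> linarith
      rw [key]
      exact mul_mem hmem₁ hmem₂
  · rw [Subgroup.closure_le]
    rintro x (⟨γ, hγ, rfl⟩ | rfl)
    · replace hγ := CongruenceSubgroup.Gamma0_mem.mp hγ
      obtain ⟨k, hc4'⟩ := (ZMod.intCast_zmod_eq_zero_iff_dvd _ 4).mp hγ
      set a : ℤ := γ.1 0 0 with ha
      set b : ℤ := γ.1 0 1 with hb
      set c : ℤ := γ.1 1 0 with hcdef
      set d : ℤ := γ.1 1 1 with hd
      have hdet : a * d - b * c = 1 := by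
        rw [ha, hb, hcdef, hd, ← Matrix.det_fin_two]; exact γ.2
      have hc4 : c = 4 * k := by exact_mod_cast hc4'
      have hmat : (γ : Matrix (Fin 2) (Fin 2) ℤ) = !![a, b; c, d] :=
        Matrix.eta_fin_two _
      have hxcoe : ((Matrix.SpecialLinearGroup.map (Int.castRingHom ℝ) γ) :
          Matrix (Fin 2) (Fin 2) ℝ) = !![(a : ℝ), b; c, d] := by
        rw [Matrix.SpecialLinearGroup.map_apply_coe, hmat]
        exact mapInt_fin_two a b c d
      have hodd : a % 2 = 1 ∧ d % 2 = 1 := by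
        have h1 : Odd (a * d) := ⟨b * (2 * k), by linear_combination hdet + b * hc4⟩
        rw [Int.odd_mul, Int.odd_iff, Int.odd_iff] at h1
        exact h1
      obtain ⟨m, hm⟩ : ∃ m, a = d + 2 * m := ⟨(a - d) / 2, by omega⟩
      have hδdet : (a + 2 * k) * (d - 2 * k) - (b - m - k) * (4 * k) = 1 := by
        linear_combination hdet - 2 * k * hm + b * hc4
      set δ := mkSL (a + 2 * k) (b - m - k) (4 * k) (d - 2 * k) hδdet with hδ
      have hδmem : δ ∈ CongruenceSubgroup.Gamma0 2 := by
        rw [CongruenceSubgroup.Gamma0_mem]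
        show (((4 : ℤ) * k : ℤ) : ZMod 2) = 0
        exact (ZMod.intCast_zmod_eq_zero_iff_dvd _ 2).mpr ⟨2 * k, by ring⟩
      refine ⟨Matrix.SpecialLinearGroup.map (Int.castRingHom ℝ) δ, ⟨δ, hδmem, rfl⟩, ?_⟩
      apply conj_inv_eq
      apply Subtype.ext
      rw [Matrix.SpecialLinearGroup.coe_mul, Matrix.SpecialLinearGroup.coe_mul,
        hxcoe, hT, hδ, mkSL_cast]
      have hmR : (a : ℝ) = d + 2 * m := by exact_mod_cast congrArg (Int.cast : ℤ → ℝ) hm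
      have hcR : (c : ℝ) = 4 * k := by exact_mod_cast congrArg (Int.cast : ℤ → ℝ) hc4
      ext i j
      fin_cases i <;> fin_cases j <;>
        simp [Matrix.mul_apply, Fin.sum_univ_two] <;> linarith
    · have hδdet : (1 : ℤ) * (-1) - (-1) * 2 = 1 := by norm_num
      have hδmem : mkSL 1 (-1) 2 (-1) hδdet ∈ CongruenceSubgroup.Gamma0 2 := by
        rw [CongruenceSubgroup.Gamma0_mem]
        show (((!![(1 : ℤ), -1; 2, -1]) 1 0 : ℤ) : ZMod 2) = 0
        decide
      refine ⟨Matrix.SpecialLinearGroup.map (Int.castRingHom ℝ) (mkSL 1 (-1) 2 (-1) hδdet),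
        ⟨_, hδmem, rfl⟩, ?_⟩
      apply conj_inv_eq
      apply Subtype.ext
      rw [Matrix.SpecialLinearGroup.coe_mul, Matrix.SpecialLinearGroup.coe_mul,
        mkSL_cast, hT, hW]
      norm_num [Matrix.mul_fin_two]
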